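/- Let T be a tree and let T_1,…,T_m be subtrees (connected subgraphs) of T that pairwise intersect. Then there is a node of T contained in all T_i (the Helly property of subtrees of a tree). -/

import Mathlib

/-!
In a tree, the vertex set of a subtree is path-convex: it contains the unique path between any
two of its vertices. Intersections of path-convex sets are again path-convex.

For three pairwise intersecting convex sets `A, B, C` pick `a ∈ A ∩ B`, `b ∈ B ∩ C`,
`c ∈ A ∩ C`. The path from `a` to `c` lies in `A` and, being extracted from the walk
`a → b → c`, in `B ∪ C`; so unless `c ∈ B` it leaves `B` along an edge `uv` with `v ∈ C`.
Of the paths from `u` and from `v` to `b`, one passes through the other endpoint, which puts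
`v` in `B` or `u` in `C`.

For more sets, induct on their number, replacing `S₁, …, Sₘ` by `Sᵢ ∩ Sₘ₊₁`: these are convex,
and pairwise intersect by the case of three sets.
-/

namespace SimpleGraph

variable {V : Type*} {G : SimpleGraph V}

lemma IsAcyclic.eq_of_isPath (hG : G.IsAcyclic) {u v : V} {p q : G.Walk u v}
    (hp : p.IsPath) (hq : q.IsPath) : p = q :=
  congrArg Subtype.val ((hG.subsingleton_path u v).elim ⟨p, hp⟩ ⟨q, hq⟩)

def IsPathConvex (G : SimpleGraph V) (S : Set V) : Prop :=
  ∀ ⦃u v : V⦄ (p : G.Walk u v), p.IsPath → u ∈ S → v ∈ S → ∀ x ∈ p.support, x ∈ S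

lemma IsPathConvex.inter {A B : Set V} (hA : G.IsPathConvex A) (hB : G.IsPathConvex B) :
    G.IsPathConvex (A ∩ B) :=
  fun _ _ p hp hu hv x hx => ⟨hA p hp hu.1 hv.1 x hx, hB p hp hu.2 hv.2 x hx⟩

lemma IsAcyclic.isPathConvex_of_preconnected_induce (hG : G.IsAcyclic) {S : Set V}
    (hS : (G.induce S).Preconnected) : G.IsPathConvex S := by
  classical
  intro u v p hp hu hv x hx
  obtain ⟨w⟩ := hS ⟨u, hu⟩ ⟨v, hv⟩
  let w' : G.Walk u v := w.map (Embedding.induce S).toHom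
  rw [hG.eq_of_isPath hp w'.bypass_isPath] at hx
  have hxw := w'.support_bypass_subset_support hx
  change x ∈ (w.map (Embedding.induce S).toHom).support at hxw
  obtain ⟨y, -, rfl⟩ := List.mem_map.1 (Walk.support_map _ _ ▸ hxw)
  exact y.2

lemma IsAcyclic.mem_support_or_mem_support_of_adj (hG : G.IsAcyclic) {u v b : V}
    (huv : G.Adj u v) {p : G.Walk u b} (hp : p.IsPath) {q : G.Walk v b} (hq : q.IsPath) :
    v ∈ p.support ∨ u ∈ q.support := by
  refine or_iff_not_imp_left.2 fun hv => ?_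
  rw [← hG.eq_of_isPath (hp.cons hv (h := huv.symm)) hq]
  exact List.mem_cons_of_mem _ p.start_mem_support

lemma IsTree.inter_inter_nonempty (hG : G.IsTree) {A B C : Set V}
    (hA : G.IsPathConvex A) (hB : G.IsPathConvex B) (hC : G.IsPathConvex C)
    (hAB : (A ∩ B).Nonempty) (hBC : (B ∩ C).Nonempty) (hAC : (A ∩ C).Nonempty) :
    (A ∩ B ∩ C).Nonempty := by
  classical
  obtain ⟨a, haA, haB⟩ := hAB
  obtain ⟨b, hbB, hbC⟩ := hBC
  obtain ⟨c, hcA, hcC⟩ := hAC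
  by_cases hcB : c ∈ B
  · exact ⟨c, ⟨hcA, hcB⟩, hcC⟩
  obtain ⟨p, hp, -⟩ := hG.existsUnique_path a b
  obtain ⟨r, hr, -⟩ := hG.existsUnique_path b c
  set q := (p.append r).bypass
  have hqA := hA q (p.append r).bypass_isPath haA hcA
  have hqBC : ∀ x ∈ q.support, x ∈ B ∨ x ∈ C := fun x hx => by
    rcases (Walk.mem_support_append_iff _ _).1 ((p.append r).support_bypass_subset_support hx)
      with hxp | hxr
    exacts [.inl (hB p hp haB hbB x hxp), .inr (hC r hr hbC hcC x hxr)]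
  obtain ⟨⟨⟨u, v⟩, huv⟩, hd, huB, hvB⟩ := q.exists_boundary_dart B haB hcB
  have hu := q.dart_fst_mem_support_of_mem_darts hd
  have hv := q.dart_snd_mem_support_of_mem_darts hd
  obtain ⟨pu, hpu, -⟩ := hG.existsUnique_path u b
  obtain ⟨pv, hpv, -⟩ := hG.existsUnique_path v b
  rcases hG.isAcyclic.mem_support_or_mem_support_of_adj huv hpu hpv with hvpu | hupv
  · exact absurd (hB pu hpu huB hbB v hvpu) hvB
  · exact ⟨u, ⟨hqA u hu, huB⟩, hC pv hpv ((hqBC v hv).resolve_left hvB) hbC u hupv⟩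

lemma IsTree.exists_forall_mem_of_pairwise_inter_nonempty (hG : G.IsTree) :
    ∀ {m : ℕ} (S : Fin (m + 1) → Set V), (∀ j, G.IsPathConvex (S j)) →
      (∀ j l, (S j ∩ S l).Nonempty) → ∃ x, ∀ j, x ∈ S j
  | 0, S, _, hpair => by
    obtain ⟨x, hx, -⟩ := hpair 0 0
    exact ⟨x, fun j => Fin.fin_one_eq_zero j ▸ hx⟩
  | m + 1, S, hconv, hpair => by
    let S' : Fin (m + 1) → Set V := fun j => S j.castSucc ∩ S (Fin.last _)
    have hpair' : ∀ j l, (S' j ∩ S' l).Nonempty := fun j l => by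
      obtain ⟨x, ⟨hxj, hxl⟩, hxlast⟩ := hG.inter_inter_nonempty (hconv _) (hconv _) (hconv _)
        (hpair j.castSucc l.castSucc) (hpair _ _) (hpair _ _)
      exact ⟨x, ⟨hxj, hxlast⟩, hxl, hxlast⟩
    obtain ⟨x, hx⟩ := hG.exists_forall_mem_of_pairwise_inter_nonempty S'
      (fun j => (hconv _).inter (hconv _)) hpair'
    exact ⟨x, Fin.lastCases (hx 0).2 (fun j => (hx j).1)⟩

end SimpleGraph

/-- Helly property of subtrees of a tree: finitely many pairwise
intersecting subtrees (connected subgraphs) of a tree have a common node. -/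
theorem helly_subtrees {ι : Type} (T : SimpleGraph ι) (hT : T.IsTree)
    (m : ℕ) (S : Fin m → Set ι)
    (hsub : ∀ j, (T.induce (S j)).Connected)
    (hpair : ∀ j l : Fin m, (S j ∩ S l).Nonempty) :
    ∃ i : ι, ∀ j, i ∈ S j := by
  cases m with
  | zero => exact ⟨hT.connected.nonempty.some, nofun⟩
  | succ m =>
    exact hT.exists_forall_mem_of_pairwise_inter_nonempty S
      (fun j => hT.isAcyclic.isPathConvex_of_preconnected_induce (hsub j).preconnected) hpair
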